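/- (Theorem 2, procrastination threshold under non-increasing purchase prices) Let t < T−1 and suppose the future purchase prices are non-increasing: π_{s+1}⁺ ≤ π_s⁺ for all s ∈ {t,…,T−2}. Then the procrastination threshold is maximal: −π_t⁺ ∈ h_{t+1}((T−t−1)·v̄), i.e., one may take τ_t = (T−t−1)·v̄, so that in the net consumption zone the optimal EV charging is v* = min{v̄, max{y_t − (T−t−1)·v̄, 0}} (the prosumer defers charging as long as the remaining demand can still be fulfilled in the remaining periods). -/

import Mathlib

open MeasureTheory Set

/-- NEM X payment for net consumption `z` with buy price `pp` and sell price `pm`. -/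
noncomputable def NEMPayment (pp pm z : ℝ) : ℝ := pp * max z 0 - pm * max (-z) 0

/-- The superdifferential of a function `f : ℝ → ℝ` (viewed as a concave function
on `[0, ∞)`) at a point `y`. -/
def superdiff (f : ℝ → ℝ) (y : ℝ) : Set ℝ :=
  {s | ∀ z, 0 ≤ z → f z ≤ f y + s * (z - y)}

/-- Data of the EV-charging / flexible-consumption dynamic program over horizon
`{0, …, T-1}` with `K` flexible loads, under NEM time-of-use prices. -/
structure EVModel (K T : ℕ) (Ω : Type) [MeasurableSpace Ω] where
  /-- underlying probability measure -/
  μ : Measure Ω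
  prob : IsProbabilityMeasure μ
  /-- consumption upper bounds -/
  dbar : Fin K → ℝ
  dbar_pos : ∀ i, 0 < dbar i
  /-- device utility functions -/
  U : Fin K → ℝ → ℝ
  U_strictConcave : ∀ i, StrictConcaveOn ℝ (Icc 0 (dbar i)) (U i)
  U_strictMono : ∀ i, StrictMonoOn (U i) (Icc 0 (dbar i))
  U_diff : ∀ i, ∀ x ∈ Icc 0 (dbar i), DifferentiableWithinAt ℝ (U i) (Icc 0 (dbar i)) x
  U_contDeriv : ∀ i, ContinuousOn (fun x => derivWithin (U i) (Icc 0 (dbar i)) x) (Icc 0 (dbar i))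
  U_zero : ∀ i, U i 0 = 0
  /-- renewable processes -/
  r : ℕ → Ω → ℝ
  r_meas : ∀ t, Measurable (r t)
  r_nonneg : ∀ t ω, 0 ≤ r t ω
  r_int : ∀ t, Integrable (r t) μ
  r_indep : ProbabilityTheory.iIndepFun r μ
  /-- time-of-use buy prices `π_t⁺` -/
  pip : ℕ → ℝ
  /-- time-of-use sell prices `π_t⁻` -/
  pim : ℕ → ℝ
  /-- maximal per-period EV charge -/
  vbar : ℝ
  vbar_pos : 0 < vbar
  /-- per-unit penalty for unmet EV demand at the horizon -/
  γ : ℝ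
  /-- `π_off⁻ = min_t π_t⁻` -/
  pioff : ℝ
  pioff_le : ∀ t < T, pioff ≤ pim t
  pioff_attained : ∃ t < T, pioff = pim t
  /-- assumption A1 -/
  A1 : ∀ t < T, 0 < pim t ∧ pim t ≤ pip t ∧ pip t < γ

namespace EVModel

variable {K T : ℕ} {Ω : Type} [MeasurableSpace Ω]

/-- Stage reward `g_t(x_t, v, d)`. -/
noncomputable def stage (M : EVModel K T Ω) (t : ℕ) (rt v : ℝ) (d : Fin K → ℝ) : ℝ :=
  ∑ i, M.U i (d i) - NEMPayment (M.pip t) (M.pim t) (v + ∑ i, d i - rt)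

/-- Feasible decisions `(v, d)` given remaining demand `y`. -/
def feas (M : EVModel K T Ω) (y : ℝ) : Set (ℝ × (Fin K → ℝ)) :=
  {p | p.1 ∈ Icc 0 (min M.vbar y) ∧ ∀ i, p.2 i ∈ Icc 0 (M.dbar i)}

/-- Value function indexed by `k = T - 1 - t`, the number of remaining periods after
the current one. -/
noncomputable def W (M : EVModel K T Ω) : ℕ → ℝ → ℝ → ℝ
  | 0 => fun y rt => sSup ((fun p : ℝ × (Fin K → ℝ) =>
      M.stage (T - 1) rt p.1 p.2 - M.γ * (y - p.1)) '' M.feas y)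
  | (k + 1) => fun y rt => sSup ((fun p : ℝ × (Fin K → ℝ) =>
      M.stage (T - 2 - k) rt p.1 p.2 +
        ∫ ω, M.W k (y - p.1) (M.r (T - 1 - k) ω) ∂M.μ) '' M.feas y)

/-- Value function `V_t(y, r_t)` (the price argument is determined by `t`). -/
noncomputable def V (M : EVModel K T Ω) (t : ℕ) (y rt : ℝ) : ℝ := M.W (T - 1 - t) y rt

/-- Expected value function `V̄_t(y) = E[V_t(y, r_t, π_t)]`. -/
noncomputable def Vbar (M : EVModel K T Ω) (t : ℕ) (y : ℝ) : ℝ := ∫ ω, M.V t y (M.r t ω) ∂M.μ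

/-- Objective of the Bellman equation at time `t` in state `(y, rt)`. -/
noncomputable def bellObj (M : EVModel K T Ω) (t : ℕ) (y rt : ℝ) (p : ℝ × (Fin K → ℝ)) : ℝ :=
  if t = T - 1 then M.stage t rt p.1 p.2 - M.γ * (y - p.1)
  else M.stage t rt p.1 p.2 + ∫ ω, M.V (t + 1) (y - p.1) (M.r (t + 1) ω) ∂M.μ

/-- `(v, d)` is an optimal solution of the Bellman equation at time `t`. -/
def IsBellmanOpt (M : EVModel K T Ω) (t : ℕ) (y rt : ℝ) (p : ℝ × (Fin K → ℝ)) : Prop :=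
  p ∈ M.feas y ∧ ∀ q ∈ M.feas y, M.bellObj t y rt q ≤ M.bellObj t y rt p

/-- Superdifferential `h_t` of the concave expected value function `V̄_t`. -/
noncomputable def h (M : EVModel K T Ω) (t : ℕ) (y : ℝ) : Set ℝ := superdiff (M.Vbar t) y

end EVModel


/-! Write `w_k` for the expected value left after the current stage when `k` periods follow it
(`w_0 y = -γ y` is the terminal penalty), so that `V̄_{t+1} = w_{T-t-1}`. Two properties
propagate through the Bellman recursion by induction on `k`. Beyond `k v̄` the demand cannot be
met any more, and each extra unit only adds the penalty: `w_k` is affine of slope `-γ` there.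
Below `k v̄`, a plan for demand `z` is matched from demand `y ≥ z` by charging the extra `y - z`
now as far as the charger allows and deferring the rest, at marginal cost at most the largest
remaining buy price `p₀`: so `w_k z ≤ w_k y + p₀ (y - z)`. Non-increasing prices allow
`p₀ = π_t⁺ < γ`, and then the two slopes make `-π_t⁺` a supergradient at `(T - t - 1) v̄`. -/

lemma NEMPayment_eq (pp pm z : ℝ) : NEMPayment pp pm z = pm * z + (pp - pm) * max z 0 := by
  have := max_zero_sub_max_neg_zero_eq_self z
  unfold NEMPayment
  linear_combination pm * this

lemma mul_le_NEMPayment {pp pm : ℝ} (h : pm ≤ pp) (z : ℝ) : pm * z ≤ NEMPayment pp pm z := by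
  rw [NEMPayment_eq]
  have : 0 ≤ (pp - pm) * max z 0 := mul_nonneg (sub_nonneg.2 h) (le_max_right z 0)
  linarith

lemma NEMPayment_add_le {pp pm : ℝ} (h : pm ≤ pp) (z : ℝ) {e : ℝ} (he : 0 ≤ e) :
    NEMPayment pp pm (z + e) ≤ NEMPayment pp pm z + pp * e := by
  have hmax : max (z + e) 0 ≤ max z 0 + e :=
    max_le (by linarith [le_max_left z 0]) (by linarith [le_max_right z 0])
  have := mul_le_mul_of_nonneg_left hmax (sub_nonneg.2 h)
  rw [NEMPayment_eq, NEMPayment_eq]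
  linarith

lemma NEMPayment_monotone {pp pm : ℝ} (hpp : 0 ≤ pp) (hpm : 0 ≤ pm) :
    Monotone (NEMPayment pp pm) := fun a b hab => by
  have h₁ : pp * max a 0 ≤ pp * max b 0 := by gcongr
  have h₂ : pm * max (-b) 0 ≤ pm * max (-a) 0 := by gcongr
  unfold NEMPayment
  linarith

lemma csSup_image_le_csSup_image_add {α β : Type*} {f : α → ℝ} {g : β → ℝ} {s : Set α}
    {u : Set β} {c : ℝ} (hs : s.Nonempty) (hg : BddAbove (g '' u))
    (h : ∀ p ∈ s, ∃ q ∈ u, f p ≤ g q + c) :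
    sSup (f '' s) ≤ sSup (g '' u) + c :=
  csSup_le (hs.image f) <| forall_mem_image.2 fun p hp => by
    obtain ⟨q, hq, hpq⟩ := h p hp
    linarith [le_csSup hg (mem_image_of_mem g hq)]

lemma neg_mem_superdiff {f : ℝ → ℝ} {c p γ : ℝ} (hpγ : p ≤ γ)
    (hle : ∀ z, 0 ≤ z → z ≤ c → f z ≤ f c + p * (c - z))
    (heq : ∀ y, c ≤ y → f y = f c - γ * (y - c)) : -p ∈ superdiff f c := by
  intro z hz
  rcases le_total z c with hzc | hcz
  · linarith [hle z hz hzc]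
  · rw [heq z hcz]
    nlinarith [mul_le_mul_of_nonneg_right hpγ (sub_nonneg.2 hcz)]

/-- The growth and monotonicity that make `ω ↦ f y (X ω)` integrable for an integrable `X ≥ 0`,
and that the Bellman recursion preserves. -/
structure IsTame (f : ℝ → ℝ → ℝ) : Prop where
  exists_le_affine : ∃ A B : ℝ, ∀ y, 0 ≤ y → ∀ rt, f y rt ≤ A + B * rt
  monotone : ∀ y, 0 ≤ y → Monotone (f y)

namespace IsTame

variable {Ω : Type*} [MeasurableSpace Ω] {μ : Measure Ω} {f : ℝ → ℝ → ℝ} {X : Ω → ℝ}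

lemma integrable [IsFiniteMeasure μ] (hf : IsTame f) (hXm : Measurable X) (hX0 : ∀ ω, 0 ≤ X ω)
    (hXi : Integrable X μ) {y : ℝ} (hy : 0 ≤ y) : Integrable (fun ω => f y (X ω)) μ := by
  obtain ⟨A, B, hAB⟩ := hf.exists_le_affine
  exact integrable_of_le_of_le ((hf.monotone y hy).measurable.comp hXm).aestronglyMeasurable
    (ae_of_all μ fun ω => hf.monotone y hy (hX0 ω)) (ae_of_all μ fun ω => hAB y hy (X ω))
    (integrable_const (f y 0)) ((integrable_const A).add (hXi.const_mul B))

lemma exists_integral_le [IsFiniteMeasure μ] (hf : IsTame f) (hXm : Measurable X)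
    (hX0 : ∀ ω, 0 ≤ X ω) (hXi : Integrable X μ) :
    ∃ C, ∀ y, 0 ≤ y → ∫ ω, f y (X ω) ∂μ ≤ C := by
  obtain ⟨A, B, hAB⟩ := hf.exists_le_affine
  exact ⟨∫ ω, A + B * X ω ∂μ, fun y hy => integral_mono (hf.integrable hXm hX0 hXi hy)
    ((integrable_const A).add (hXi.const_mul B)) fun ω => hAB y hy (X ω)⟩

lemma integral_le_add [IsProbabilityMeasure μ] (hf : IsTame f) (hXm : Measurable X)
    (hX0 : ∀ ω, 0 ≤ X ω) (hXi : Integrable X μ) {y z a : ℝ} (hy : 0 ≤ y) (hz : 0 ≤ z)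
    (h : ∀ rt, 0 ≤ rt → f z rt ≤ f y rt + a) :
    ∫ ω, f z (X ω) ∂μ ≤ ∫ ω, f y (X ω) ∂μ + a := by
  have hy' := hf.integrable hXm hX0 hXi hy
  calc ∫ ω, f z (X ω) ∂μ ≤ ∫ ω, f y (X ω) + a ∂μ :=
        integral_mono (hf.integrable hXm hX0 hXi hz) (hy'.add (integrable_const a))
          fun ω => h _ (hX0 ω)
    _ = ∫ ω, f y (X ω) ∂μ + a := by
        rw [integral_add hy' (integrable_const a), integral_const, probReal_univ, one_smul]

lemma integral_eq_add [IsProbabilityMeasure μ] (hf : IsTame f) (hXm : Measurable X)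
    (hX0 : ∀ ω, 0 ≤ X ω) (hXi : Integrable X μ) {y z a : ℝ} (hy : 0 ≤ y) (hz : 0 ≤ z)
    (h : ∀ rt, 0 ≤ rt → f z rt = f y rt + a) :
    ∫ ω, f z (X ω) ∂μ = ∫ ω, f y (X ω) ∂μ + a := by
  have h₁ := hf.integral_le_add hXm hX0 hXi hy hz fun rt hrt => (h rt hrt).le
  have h₂ := hf.integral_le_add (a := -a) hXm hX0 hXi hz hy fun rt hrt => by linarith [h rt hrt]
  linarith

end IsTame

namespace EVModel

variable {K T : ℕ} {Ω : Type} [MeasurableSpace Ω]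

section Stage

variable {M : EVModel K T Ω} {s : ℕ}

lemma sum_U_le {d : Fin K → ℝ} (hd : ∀ i, d i ∈ Icc 0 (M.dbar i)) :
    ∑ i, M.U i (d i) ≤ ∑ i, M.U i (M.dbar i) :=
  Finset.sum_le_sum fun i _ =>
    (M.U_strictMono i).monotoneOn (hd i) ⟨(M.dbar_pos i).le, le_rfl⟩ (hd i).2

lemma stage_le (hs : s < T) (rt : ℝ) {v : ℝ} {d : Fin K → ℝ} (hv : 0 ≤ v)
    (hd : ∀ i, d i ∈ Icc 0 (M.dbar i)) :
    M.stage s rt v d ≤ ∑ i, M.U i (M.dbar i) + M.pim s * rt := by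
  have hd0 : 0 ≤ ∑ i, d i := Finset.sum_nonneg fun i _ => (hd i).1
  have hpay := mul_le_NEMPayment (M.A1 s hs).2.1 (v + ∑ i, d i - rt)
  have hpim := (M.A1 s hs).1.le
  have hU := sum_U_le hd
  unfold stage
  nlinarith

lemma stage_monotone (hs : s < T) (v : ℝ) (d : Fin K → ℝ) :
    Monotone fun rt => M.stage s rt v d := fun a b hab => by
  have := NEMPayment_monotone ((M.A1 s hs).1.trans_le (M.A1 s hs).2.1).le (M.A1 s hs).1.le
    (show v + ∑ i, d i - b ≤ v + ∑ i, d i - a by linarith)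
  unfold stage
  linarith

lemma stage_sub_le (hs : s < T) (rt v : ℝ) (d : Fin K → ℝ) {e : ℝ} (he : 0 ≤ e) :
    M.stage s rt v d - M.pip s * e ≤ M.stage s rt (v + e) d := by
  have := NEMPayment_add_le (M.A1 s hs).2.1 (v + ∑ i, d i - rt) he
  unfold stage
  rw [show v + e + ∑ i, d i - rt = v + ∑ i, d i - rt + e by ring]
  linarith

end Stage

section Feasible

variable {M : EVModel K T Ω} {y : ℝ}

lemma zero_mem_feas (hy : 0 ≤ y) : ((0 : ℝ), (0 : Fin K → ℝ)) ∈ M.feas y :=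
  ⟨⟨le_rfl, le_min M.vbar_pos.le hy⟩, fun i => ⟨le_rfl, (M.dbar_pos i).le⟩⟩

lemma feas_nonempty (hy : 0 ≤ y) : (M.feas y).Nonempty :=
  ⟨_, zero_mem_feas hy⟩

lemma feas_eq_feas_vbar (hy : M.vbar ≤ y) : M.feas y = M.feas M.vbar := by
  rw [feas, feas, min_eq_left hy, min_self]

end Feasible

noncomputable def bellman (M : EVModel K T Ω) (s : ℕ) (w : ℝ → ℝ) (y rt : ℝ) : ℝ :=
  sSup ((fun p : ℝ × (Fin K → ℝ) => M.stage s rt p.1 p.2 + w (y - p.1)) '' M.feas y)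

section Bellman

variable {M : EVModel K T Ω} {s : ℕ} {w : ℝ → ℝ} {C : ℝ}

lemma bellman_objective_le (hs : s < T) (hw : ∀ y, 0 ≤ y → w y ≤ C) {y : ℝ} (rt : ℝ)
    {p : ℝ × (Fin K → ℝ)} (hp : p ∈ M.feas y) :
    M.stage s rt p.1 p.2 + w (y - p.1) ≤ (∑ i, M.U i (M.dbar i) + C) + M.pim s * rt := by
  have hstage := stage_le hs rt hp.1.1 hp.2
  have hw' := hw (y - p.1) (sub_nonneg.2 (hp.1.2.trans (min_le_right _ _)))
  linarith

lemma bddAbove_bellman_image (hs : s < T) (hw : ∀ y, 0 ≤ y → w y ≤ C) (y rt : ℝ) :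
    BddAbove ((fun p : ℝ × (Fin K → ℝ) => M.stage s rt p.1 p.2 + w (y - p.1)) '' M.feas y) :=
  ⟨_, forall_mem_image.2 fun _ hp => bellman_objective_le hs hw rt hp⟩

lemma isTame_bellman (hs : s < T) (hw : ∀ y, 0 ≤ y → w y ≤ C) : IsTame (M.bellman s w) where
  exists_le_affine := ⟨_, _, fun y hy rt => csSup_le ((feas_nonempty hy).image _)
    (forall_mem_image.2 fun _ hp => bellman_objective_le hs hw rt hp)⟩
  monotone y hy a b hab := by
    simp only [bellman]
    simpa using csSup_image_le_csSup_image_add (c := 0) (feas_nonempty hy)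
      (bddAbove_bellman_image hs hw y b) fun p hp =>
        ⟨p, hp, by simpa using stage_monotone hs p.1 p.2 hab⟩

lemma bellman_eq_sub (hs : s < T) (hw : ∀ y, 0 ≤ y → w y ≤ C) {c : ℝ} (hc : 0 ≤ c)
    (hshift : ∀ y, c ≤ y → w y = w c - M.γ * (y - c)) {y : ℝ} (rt : ℝ) (hy : c + M.vbar ≤ y) :
    M.bellman s w y rt = M.bellman s w (c + M.vbar) rt - M.γ * (y - (c + M.vbar)) := by
  have hvbar := M.vbar_pos
  have hfeas : M.feas y = M.feas (c + M.vbar) := by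
    rw [feas_eq_feas_vbar (y := y) (by linarith),
      feas_eq_feas_vbar (y := c + M.vbar) (by linarith)]
  have hobj : ∀ p ∈ M.feas (c + M.vbar),
      w (y - p.1) = w (c + M.vbar - p.1) - M.γ * (y - (c + M.vbar)) := fun p hp => by
    have hp₁ : p.1 ≤ M.vbar := hp.1.2.trans (min_le_left _ _)
    rw [hshift _ (by linarith), hshift (c + M.vbar - p.1) (by linarith)]
    ring
  have hne := feas_nonempty (M := M) (add_nonneg hc hvbar.le)
  have hbdd := bddAbove_bellman_image (M := M) hs hw (c + M.vbar) rt
  have h₁ : M.bellman s w y rt ≤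
      M.bellman s w (c + M.vbar) rt + -(M.γ * (y - (c + M.vbar))) := by
    unfold bellman
    rw [hfeas]
    exact csSup_image_le_csSup_image_add hne hbdd fun p hp =>
      ⟨p, hp, by rw [hobj p hp]; linarith⟩
  have h₂ : M.bellman s w (c + M.vbar) rt ≤
      M.bellman s w y rt + M.γ * (y - (c + M.vbar)) := by
    unfold bellman
    rw [hfeas]
    exact csSup_image_le_csSup_image_add hne (hfeas ▸ bddAbove_bellman_image hs hw y rt)
      fun p hp => ⟨p, hp, by rw [hobj p hp]; linarith⟩
  linarith

lemma bellman_le_add (hs : s < T) (hw : ∀ y, 0 ≤ y → w y ≤ C) {p₀ c : ℝ} (hp₀ : M.pip s ≤ p₀)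
    (hlip : ∀ z y, 0 ≤ z → z ≤ y → y ≤ c → w z ≤ w y + p₀ * (y - z)) {z y : ℝ} (rt : ℝ)
    (hz : 0 ≤ z) (hzy : z ≤ y) (hy : y ≤ c + M.vbar) :
    M.bellman s w z rt ≤ M.bellman s w y rt + p₀ * (y - z) := by
  refine csSup_image_le_csSup_image_add (feas_nonempty hz) (bddAbove_bellman_image hs hw y rt) ?_
  rintro ⟨v, d⟩ ⟨⟨hv0, hv⟩, hd⟩
  have hvz : v ≤ z := hv.trans (min_le_right _ _)
  have hvb : v ≤ M.vbar := hv.trans (min_le_left _ _)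
  have hcharge : ∀ e, 0 ≤ e → M.stage s rt v d - p₀ * e ≤ M.stage s rt (v + e) d := fun e he =>
    (sub_le_sub_left (mul_le_mul_of_nonneg_right hp₀ he) _).trans (stage_sub_le hs rt v d he)
  rcases le_total (y - z) (M.vbar - v) with hfits | hexceeds
  · refine ⟨(v + (y - z), d), ⟨⟨by linarith, le_min (by linarith) (by linarith)⟩, hd⟩, ?_⟩
    have := hcharge (y - z) (by linarith)
    simp only [show y - (v + (y - z)) = z - v by ring]
    linarith
  · refine ⟨(M.vbar, d), ⟨⟨M.vbar_pos.le, le_min le_rfl (by linarith)⟩, hd⟩, ?_⟩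
    have hstage := hcharge (M.vbar - v) (by linarith)
    rw [add_sub_cancel] at hstage
    have := hlip (z - v) (y - M.vbar) (by linarith) (by linarith) (by linarith)
    dsimp only
    linarith

end Bellman

variable (M : EVModel K T Ω)

noncomputable def contValue : ℕ → ℝ → ℝ
  | 0 => fun y => -(M.γ * y)
  | k + 1 => fun y => ∫ ω, M.W k y (M.r (T - 1 - k) ω) ∂M.μ

lemma W_eq_bellman (k : ℕ) : M.W k = M.bellman (T - 1 - k) (M.contValue k) := by
  funext y rt
  cases k with
  | zero => simp only [W, bellman, contValue, Nat.sub_zero, sub_eq_add_neg]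
  | succ k =>
    rw [show T - 1 - (k + 1) = T - 2 - k by omega]
    rfl

lemma Vbar_eq_contValue {s : ℕ} (hs : s < T) : M.Vbar s = M.contValue (T - s) := by
  funext y
  rw [show T - s = T - 1 - s + 1 by omega]
  simp only [Vbar, V, contValue]
  rw [show T - 1 - (T - 1 - s) = s by omega]

variable {M}

lemma exists_contValue_le (hT : 0 < T) (k : ℕ) : ∃ C, ∀ y, 0 ≤ y → M.contValue k y ≤ C := by
  have := M.prob
  cases k with
  | zero =>
    have hγ : 0 ≤ M.γ := ((M.A1 0 hT).1.trans_le (M.A1 0 hT).2.1).trans (M.A1 0 hT).2.2 |>.le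
    exact ⟨0, fun y hy => neg_nonpos.2 (mul_nonneg hγ hy)⟩
  | succ k =>
    obtain ⟨C, hC⟩ := exists_contValue_le hT k
    have hW : IsTame (M.W k) := M.W_eq_bellman k ▸ isTame_bellman (by omega) hC
    exact hW.exists_integral_le (M.r_meas _) (M.r_nonneg _) (M.r_int _)

lemma isTame_W (hT : 0 < T) (k : ℕ) : IsTame (M.W k) :=
  M.W_eq_bellman k ▸ isTame_bellman (by omega) (exists_contValue_le hT k).choose_spec

lemma contValue_eq_sub (hT : 0 < T) (k : ℕ) {y : ℝ} (hy : k * M.vbar ≤ y) :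
    M.contValue k y = M.contValue k (k * M.vbar) - M.γ * (y - k * M.vbar) := by
  have := M.prob
  induction k generalizing y with
  | zero => simp [contValue]
  | succ k ih =>
    have hk : ((k + 1 : ℕ) : ℝ) * M.vbar = k * M.vbar + M.vbar := by push_cast; ring
    have hc : 0 ≤ (k : ℝ) * M.vbar := mul_nonneg k.cast_nonneg M.vbar_pos.le
    rw [hk] at hy ⊢
    simp only [contValue]
    refine (isTame_W hT k).integral_eq_add (M.r_meas _) (M.r_nonneg _) (M.r_int _)
      (by linarith [M.vbar_pos]) (by linarith [M.vbar_pos]) fun rt _ => ?_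
    rw [M.W_eq_bellman k, bellman_eq_sub (by omega) (exists_contValue_le hT k).choose_spec hc
      (fun y hy => ih hy) rt hy, sub_eq_add_neg]

lemma contValue_le_add (hT : 0 < T) (k : ℕ) {p₀ : ℝ}
    (hp₀ : ∀ s, T - k ≤ s → s < T → M.pip s ≤ p₀) {z y : ℝ} (hz : 0 ≤ z) (hzy : z ≤ y)
    (hy : y ≤ k * M.vbar) : M.contValue k z ≤ M.contValue k y + p₀ * (y - z) := by
  have := M.prob
  induction k generalizing z y with
  | zero =>
    obtain rfl : z = y := by simp at hy; linarith
    simp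
  | succ k ih =>
    have hk : ((k + 1 : ℕ) : ℝ) * M.vbar = k * M.vbar + M.vbar := by push_cast; ring
    rw [hk] at hy
    simp only [contValue]
    refine (isTame_W hT k).integral_le_add (M.r_meas _) (M.r_nonneg _) (M.r_int _)
      (hz.trans hzy) hz fun rt _ => ?_
    rw [M.W_eq_bellman k]
    exact bellman_le_add (by omega) (exists_contValue_le hT k).choose_spec
      (hp₀ _ (by omega) (by omega))
      (fun z y hz hzy hy => ih (fun s hs => hp₀ s (by omega)) hz hzy hy) rt hz hzy hy

end EVModel

/-- **Theorem 2 (procrastination threshold under non-increasing purchase prices).**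
Let `t < T - 1` and suppose the future purchase prices are non-increasing:
`π_{s+1}⁺ ≤ π_s⁺` for all `s ∈ {t, …, T-2}`.  Then the procrastination threshold is
maximal: `-π_t⁺ ∈ h_{t+1}((T - t - 1) v̄)`, i.e. one may take `τ_t = (T - t - 1) v̄`,
so that in the net consumption zone the optimal EV charging is
`v* = min {v̄, max {y_t - (T - t - 1) v̄, 0}}` (the prosumer defers charging as long as
the remaining demand can still be fulfilled in the remaining periods). -/
theorem thm2_procrastination_threshold (K T : ℕ) (Ω : Type) [MeasurableSpace Ω]
    (M : EVModel K T Ω) (t : ℕ) (ht : t < T - 1)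
    (hprice : ∀ s, t ≤ s → s ≤ T - 2 → M.pip (s + 1) ≤ M.pip s) :
    -M.pip t ∈ M.h (t + 1) (((T - t - 1 : ℕ) : ℝ) * M.vbar) := by
  have hT : 0 < T := by omega
  have hlater : ∀ s, t ≤ s → s < T → M.pip s ≤ M.pip t := by
    intro s hts
    induction s, hts using Nat.le_induction with
    | base => exact fun _ => le_rfl
    | succ s hts ih => exact fun hs => (hprice s hts (by omega)).trans (ih (by omega))
  rw [EVModel.h, M.Vbar_eq_contValue (by omega), show T - (t + 1) = T - t - 1 by omega]
  exact neg_mem_superdiff (M.A1 t (by omega)).2.2.le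
    (fun z hz hzc => EVModel.contValue_le_add hT _ (fun s hs => hlater s (by omega)) hz hzc le_rfl)
    (fun y hy => EVModel.contValue_eq_sub hT _ hy)
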